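/- Let q : [0, 2] → (ℝ²)⁴ be defined for t ∈ [0,1] by a solution of the planar equal-mass four-body Newtonian equations with q₁ ≡ −q₄, q₂ ≡ −q₃, whose configuration at t = 1 is a rectangle in V₁(θ) (i.e. q(1)·R(−θ) is a rectangle symmetric about the coordinate axes with q₁, q₂ in the left half-plane), and whose velocities satisfy q̇₁(1) = −q̇₂(1)·B·R(2θ) and q̇₄(1) = −q̇₃(1)·B·R(2θ), where B = diag(1, −1) and R(2θ) is rotation by 2θ. Define for t ∈ [1, 2]: q₁(t) = q₂(2−t)·B·R(2θ), q₂(t) = q₁(2−t)·B·R(2θ), q₃(t) = q₄(2−t)·B·R(2θ), q₄(t) = q₃(2−t)·B·R(2θ). Then the extended q is C¹ at t = 1 and is a solution of the Newtonian equations on (0, 2). -/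

import Mathlib

open Set Real

/-- Euclidean norm on `ℝ × ℝ`. -/
noncomputable def n2 (p : ℝ × ℝ) : ℝ := Real.sqrt (p.1 ^ 2 + p.2 ^ 2)

/-- Right multiplication of a row vector by the rotation matrix
`R(ψ) = [[cos ψ, sin ψ], [−sin ψ, cos ψ]]`. -/
noncomputable def rotRow (ψ : ℝ) (p : ℝ × ℝ) : ℝ × ℝ :=
  (p.1 * Real.cos ψ - p.2 * Real.sin ψ, p.1 * Real.sin ψ + p.2 * Real.cos ψ)

/-- Right multiplication by `B·R(2θ)`, where `B = diag(1, −1)`. -/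
noncomputable def BR (θ : ℝ) (p : ℝ × ℝ) : ℝ × ℝ := rotRow (2 * θ) (p.1, -p.2)

/-- The relabeling `1 ↔ 2`, `3 ↔ 4` of the bodies. -/
def σswap : Fin 4 → Fin 4 := ![1, 0, 3, 2]

/-!
Newton's equations are invariant under time reversal `t ↦ 2 - t` combined with an isometry of
the plane and a relabeling of the bodies, so the reflected half
`t ↦ q_{σ(i)}(2 - t)·B·R(2θ)` is again a solution on `[1, 2]`. Since `B·R(2θ)` is the reflection
in the symmetry axis of the rectangle at `t = 1`, the two halves have the same positions at
`t = 1`, and the boundary conditions say exactly that they have the same velocities there.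
Their accelerations at `t = 1` then agree as well, both being given by Newton's law, so the glued
path is twice differentiable and solves the equations on `(0, 2)`.
-/

lemma hasDerivAt_ite_le {E : Type*} [NormedAddCommGroup E] [NormedSpace ℝ E] {a b c : ℝ}
    {f g f' g' : ℝ → E}
    (hf : ∀ t ∈ Icc a b, HasDerivAt f (f' t) t) (hg : ∀ t ∈ Icc b c, HasDerivAt g (g' t) t)
    (hfg : f b = g b) (hfg' : f' b = g' b) :
    ∀ t ∈ Ioo a c, HasDerivAt (fun t => if t ≤ b then f t else g t)
      (if t ≤ b then f' t else g' t) t := by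
  rintro t ⟨hat, htc⟩
  rcases lt_trichotomy t b with htb | htb | hbt
  · rw [if_pos htb.le]
    refine (hf t ⟨hat.le, htb.le⟩).congr_of_eventuallyEq ?_
    filter_upwards [Iio_mem_nhds htb] with s hs
    exact if_pos (le_of_lt hs)
  · rw [htb, if_pos le_rfl]
    have hleft : HasDerivWithinAt (fun t => if t ≤ b then f t else g t) (f' b) (Iic b) b :=
      (hf b ⟨htb ▸ hat.le, le_rfl⟩).hasDerivWithinAt.congr (fun s hs => if_pos hs)
        (if_pos le_rfl)
    have hright : HasDerivWithinAt (fun t => if t ≤ b then f t else g t) (f' b) (Ici b) b := by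
      rw [hfg']
      refine (hg b ⟨le_rfl, htb ▸ htc.le⟩).hasDerivWithinAt.congr (fun s hs => ?_) (by simp [hfg])
      rcases (mem_Ici.mp hs).eq_or_lt with rfl | hbs
      · simp [hfg]
      · exact if_neg (not_le.mpr hbs)
    simpa [Iic_union_Ici] using hleft.union hright
  · rw [if_neg (not_le.mpr hbt)]
    refine (hg t ⟨hbt.le, htc.le⟩).congr_of_eventuallyEq ?_
    filter_upwards [Ioi_mem_nhds hbt] with s hs
    exact if_neg (not_le.mpr hs)

noncomputable def BRclm (θ : ℝ) : ℝ × ℝ →L[ℝ] ℝ × ℝ :=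
  LinearMap.toContinuousLinearMap
    { toFun := BR θ
      map_add' := fun a b => by
        simp only [BR, rotRow, Prod.ext_iff, Prod.fst_add, Prod.snd_add]
        constructor <;> ring
      map_smul' := fun c a => by
        simp only [BR, rotRow, Prod.ext_iff, Prod.smul_fst, Prod.smul_snd, smul_eq_mul,
          RingHom.id_apply]
        constructor <;> ring }

@[simp]
lemma BRclm_apply (θ : ℝ) (p : ℝ × ℝ) : BRclm θ p = BR θ p := rfl

lemma n2_BR (θ : ℝ) (p : ℝ × ℝ) : n2 (BR θ p) = n2 p := by
  unfold n2 BR rotRow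
  congr 1
  linear_combination (p.1 ^ 2 + p.2 ^ 2) * sin_sq_add_cos_sq (2 * θ)

lemma BR_involutive (θ : ℝ) : Function.Involutive (BR θ) := fun p => by
  simp only [BR, rotRow, Prod.ext_iff]
  constructor
  · linear_combination p.1 * sin_sq_add_cos_sq (2 * θ)
  · linear_combination p.2 * sin_sq_add_cos_sq (2 * θ)

lemma BR_neg (θ : ℝ) (p : ℝ × ℝ) : BR θ (-p) = -BR θ p := (BRclm θ).map_neg p

lemma BR_rotRow (θ a b : ℝ) : BR θ (rotRow θ (a, b)) = rotRow θ (a, -b) := by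
  simp only [BR, rotRow, Prod.ext_iff, cos_two_mul, sin_two_mul]
  constructor
  · linear_combination (2 * a * cos θ) * sin_sq_add_cos_sq θ
  · linear_combination (-2 * b * cos θ) * sin_sq_add_cos_sq θ

def σswapPerm : Equiv.Perm (Fin 4) := ⟨σswap, σswap, by decide, by decide⟩

lemma eq_apply_σswap_of_involutive {α : Type*} {f : α → α} (hf : Function.Involutive f)
    {x : Fin 4 → α} (h0 : x 0 = f (x 1)) (h3 : x 3 = f (x 2)) :
    ∀ i, x i = f (x (σswap i)) := by
  intro i
  fin_cases i
  · exact h0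
  · exact (hf (x 1)).symm.trans (congrArg f h0.symm)
  · exact (hf (x 2)).symm.trans (congrArg f h3.symm)
  · exact h3

lemma eq_BR_σswap_of_rectangle {θ b₁ b₂ : ℝ} {x : Fin 4 → ℝ × ℝ}
    (h0 : x 0 = rotRow θ (-b₁, -b₂)) (h1 : x 1 = rotRow θ (-b₁, b₂))
    (h2 : x 2 = -x 1) (h3 : x 3 = -x 0) :
    ∀ i, x i = BR θ (x (σswap i)) := by
  have h01 : x 0 = BR θ (x 1) := by rw [h0, h1, BR_rotRow]
  exact eq_apply_σswap_of_involutive (BR_involutive θ) h01 (by rw [h3, h2, BR_neg, h01])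

section Newton

variable {ι : Type*} [Fintype ι] [DecidableEq ι]

noncomputable def newtonForce (x : ι → ℝ × ℝ) (i : ι) : ℝ × ℝ :=
  ∑ j ∈ Finset.univ.erase i, (1 / n2 (x j - x i) ^ 3) • (x j - x i)

lemma newtonForce_map_comp_perm (L : ℝ × ℝ →L[ℝ] ℝ × ℝ) (hL : ∀ p, n2 (L p) = n2 p)
    (σ : Equiv.Perm ι) (x : ι → ℝ × ℝ) (i : ι) :
    newtonForce (fun j => L (x (σ j))) i = L (newtonForce x (σ i)) := by
  unfold newtonForce
  rw [map_sum]
  refine Finset.sum_equiv σ (fun j => by simp) (fun j _ => ?_)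
  rw [← map_sub, hL, map_smul]

def IsNewtonianSolutionOn (S : Set ℝ) (q q' q'' : ι → ℝ → ℝ × ℝ) : Prop :=
  ∀ i, ∀ t ∈ S, HasDerivAt (q i) (q' i t) t ∧ HasDerivAt (q' i) (q'' i t) t ∧
    q'' i t = newtonForce (fun j => q j t) i

variable {S T : Set ℝ} {q q' q'' : ι → ℝ → ℝ × ℝ}

lemma IsNewtonianSolutionOn.mono (h : IsNewtonianSolutionOn S q q' q'') (hTS : T ⊆ S) :
    IsNewtonianSolutionOn T q q' q'' :=
  fun i t ht => h i t (hTS ht)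

lemma IsNewtonianSolutionOn.reflect (h : IsNewtonianSolutionOn S q q' q'')
    (L : ℝ × ℝ →L[ℝ] ℝ × ℝ) (hL : ∀ p, n2 (L p) = n2 p) (σ : Equiv.Perm ι) (c : ℝ) :
    IsNewtonianSolutionOn ((c - ·) ⁻¹' S)
      (fun i s => L (q (σ i) (c - s))) (fun i s => -L (q' (σ i) (c - s)))
      (fun i s => L (q'' (σ i) (c - s))) := by
  intro i s hs
  obtain ⟨hq, hq', hN⟩ := h (σ i) (c - s) hs
  refine ⟨?_, ?_, ?_⟩
  · have h' := L.hasFDerivAt.comp_hasDerivAt s (hq.comp_const_sub c s)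
    rw [map_neg] at h'
    exact h'
  · have h' := (L.hasFDerivAt.comp_hasDerivAt s (hq'.comp_const_sub c s)).neg
    rw [map_neg, neg_neg] at h'
    exact h'
  · exact (congrArg L hN).trans (newtonForce_map_comp_perm L hL σ _ i).symm

variable {a b c : ℝ} {p p' p'' : ι → ℝ → ℝ × ℝ}

lemma IsNewtonianSolutionOn.glue (hq : IsNewtonianSolutionOn (Icc a b) q q' q'')
    (hp : IsNewtonianSolutionOn (Icc b c) p p' p'') (hab : a ≤ b) (hbc : b ≤ c)
    (hpos : ∀ i, q i b = p i b) (hvel : ∀ i, q' i b = p' i b) :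
    IsNewtonianSolutionOn (Ioo a c) (fun i t => if t ≤ b then q i t else p i t)
      (fun i t => if t ≤ b then q' i t else p' i t)
      (fun i t => if t ≤ b then q'' i t else p'' i t) := by
  intro i t ht
  have hacc : q'' i b = p'' i b := by
    rw [(hq i b ⟨hab, le_rfl⟩).2.2, (hp i b ⟨le_rfl, hbc⟩).2.2, funext hpos]
  refine ⟨hasDerivAt_ite_le (fun t ht => (hq i t ht).1) (fun t ht => (hp i t ht).1)
    (hpos i) (hvel i) t ht, hasDerivAt_ite_le (fun t ht => (hq i t ht).2.1)
    (fun t ht => (hp i t ht).2.1) (hvel i) hacc t ht, ?_⟩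
  by_cases htb : t ≤ b
  · simpa [htb] using (hq i t ⟨ht.1.le, htb⟩).2.2
  · simpa [htb] using (hp i t ⟨(not_le.mp htb).le, ht.2.le⟩).2.2

end Newton

theorem stmt19_general (θ : ℝ) (q q' q'' : Fin 4 → ℝ → ℝ × ℝ)
    (hd : ∀ i, ∀ t ∈ Icc (0 : ℝ) 1, HasDerivAt (q i) (q' i t) t)
    (hdd : ∀ i, ∀ t ∈ Icc (0 : ℝ) 1, HasDerivAt (q' i) (q'' i t) t)
    (hNewton : ∀ i, ∀ t ∈ Icc (0 : ℝ) 1,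
      q'' i t = ∑ j ∈ Finset.univ.erase i,
        (1 / n2 (q j t - q i t) ^ 3) • (q j t - q i t))
    (hsym14 : ∀ t ∈ Icc (0 : ℝ) 1, q 0 t = - q 3 t)
    (hsym23 : ∀ t ∈ Icc (0 : ℝ) 1, q 1 t = - q 2 t)
    (hrect : ∃ b1 ≥ (0 : ℝ), ∃ b2 ≥ (0 : ℝ),
      q 0 1 = rotRow θ (-b1, -b2) ∧ q 1 1 = rotRow θ (-b1, b2))
    (hvel1 : q' 0 1 = - BR θ (q' 1 1))
    (hvel2 : q' 3 1 = - BR θ (q' 2 1))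
    (Q : Fin 4 → ℝ → ℝ × ℝ)
    (hQ : ∀ i t, Q i t = if t ≤ 1 then q i t else BR θ (q (σswap i) (2 - t))) :
    ∃ Q' Q'' : Fin 4 → ℝ → ℝ × ℝ, ∀ i, ∀ t ∈ Ioo (0 : ℝ) 2,
      HasDerivAt (Q i) (Q' i t) t ∧ HasDerivAt (Q' i) (Q'' i t) t ∧
      Q'' i t = ∑ j ∈ Finset.univ.erase i,
        (1 / n2 (Q j t - Q i t) ^ 3) • (Q j t - Q i t) := by
  have hone : (1 : ℝ) ∈ Icc (0 : ℝ) 1 := ⟨zero_le_one, le_rfl⟩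
  have hq : IsNewtonianSolutionOn (Icc 0 1) q q' q'' :=
    fun i t ht => ⟨hd i t ht, hdd i t ht, hNewton i t ht⟩
  have hp := (hq.reflect (BRclm θ) (n2_BR θ) σswapPerm 2).mono
    (T := Icc 1 2) fun s hs => ⟨by linarith [hs.2], by linarith [hs.1]⟩
  obtain ⟨b₁, -, b₂, -, h0, h1⟩ := hrect
  have hpos : ∀ i, q i 1 = BR θ (q (σswap i) 1) :=
    eq_BR_σswap_of_rectangle h0 h1 (neg_eq_iff_eq_neg.mpr (hsym23 1 hone)).symm
      (neg_eq_iff_eq_neg.mpr (hsym14 1 hone)).symm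
  have hvel : ∀ i, q' i 1 = -BR θ (q' (σswap i) 1) :=
    eq_apply_σswap_of_involutive (f := fun v => -BR θ v)
      (fun v => by simp only [BR_neg, neg_neg, BR_involutive θ v]) hvel1 hvel2
  obtain rfl : Q = fun i t => if t ≤ 1 then q i t else BR θ (q (σswap i) (2 - t)) :=
    funext fun i => funext (hQ i)
  have h21 : (2 : ℝ) - 1 = 1 := by norm_num
  exact ⟨_, _, hq.glue hp zero_le_one one_le_two (fun i => by rw [h21]; exact hpos i)
    (fun i => by rw [h21]; exact hvel i)⟩

/-- A collision-free solution of the equal-mass four-body problem on `[0,1]` with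
`q₁ ≡ −q₄`, `q₂ ≡ −q₃`, whose configuration at `t = 1` is a rectangle in `V₁(θ)` and whose
velocities satisfy the first-variation boundary conditions at `t = 1`, extends by
`Qᵢ(t) = q_{σ(i)}(2−t)·B·R(2θ)` for `t ∈ [1,2]` to a C¹ classical solution on `(0, 2)`. -/
theorem stmt19 (θ : ℝ) (hθ : θ ∈ Ioo (0 : ℝ) (π / 2)) (q q' q'' : Fin 4 → ℝ → ℝ × ℝ)
    (hd : ∀ i, ∀ t ∈ Icc (0 : ℝ) 1, HasDerivAt (q i) (q' i t) t)
    (hdd : ∀ i, ∀ t ∈ Icc (0 : ℝ) 1, HasDerivAt (q' i) (q'' i t) t)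
    (hsep : ∀ t ∈ Icc (0 : ℝ) 1, ∀ i j, i ≠ j → q i t ≠ q j t)
    (hNewton : ∀ i, ∀ t ∈ Icc (0 : ℝ) 1,
      q'' i t = ∑ j ∈ Finset.univ.erase i,
        (1 / n2 (q j t - q i t) ^ 3) • (q j t - q i t))
    (hsym14 : ∀ t ∈ Icc (0 : ℝ) 1, q 0 t = - q 3 t)
    (hsym23 : ∀ t ∈ Icc (0 : ℝ) 1, q 1 t = - q 2 t)
    (hrect : ∃ b1 ≥ (0 : ℝ), ∃ b2 ≥ (0 : ℝ),
      q 0 1 = rotRow θ (-b1, -b2) ∧ q 1 1 = rotRow θ (-b1, b2))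
    (hvel1 : q' 0 1 = - BR θ (q' 1 1))
    (hvel2 : q' 3 1 = - BR θ (q' 2 1))
    (Q : Fin 4 → ℝ → ℝ × ℝ)
    (hQ : ∀ i t, Q i t = if t ≤ 1 then q i t else BR θ (q (σswap i) (2 - t))) :
    ∃ Q' Q'' : Fin 4 → ℝ → ℝ × ℝ, ∀ i, ∀ t ∈ Ioo (0 : ℝ) 2,
      HasDerivAt (Q i) (Q' i t) t ∧ HasDerivAt (Q' i) (Q'' i t) t ∧
      Q'' i t = ∑ j ∈ Finset.univ.erase i,
        (1 / n2 (Q j t - Q i t) ^ 3) • (Q j t - Q i t) :=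
  stmt19_general θ q q' q'' hd hdd hNewton hsym14 hsym23 hrect hvel1 hvel2 Q hQ
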